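/- If (M, 𝒮; e_1, …, e_h) is an (a, q, h, d)-pyramid and h' is an integer with 0 ≤ h' ≤ h, then there is a restriction M' of M with r(M') = a + h' and a subcollection 𝒮' ⊆ 𝒮 such that (M', 𝒮'; e_1, …, e_{h'}) is an (a, q, h', d)-pyramid and ε_{M'}(𝒮') ≥ q^{h'}. -/

import Mathlib

open Set
open scoped Classical

namespace Matroid

variable {α β : Type*}

/-- The rank of a set `X` in a matroid `M`: the maximum size of an independent subset of `X`
(appropriate for finite matroids). -/
noncomputable def rk (M : Matroid α) (X : Set α) : ℕ :=
  sSup {n | ∃ I, I ⊆ X ∧ M.Indep I ∧ I.ncard = n}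

/-- The rank `r(M)` of a matroid `M`. -/
noncomputable def rank (M : Matroid α) : ℕ := M.rk M.E

/-- The deletion `M \ D` of a set `D` from `M`. -/
def deleteSet (M : Matroid α) (D : Set α) : Matroid α := M ↾ (M.E \ D)

/-- The contraction `M / C` of a set `C` in `M`, defined via duality. -/
def contractSet (M : Matroid α) (C : Set α) : Matroid α := (M✶.deleteSet C)✶

/-- `N` is a minor of `M`, i.e. `N = M / C \ D` for some sets `C` and `D`. -/
def IsMinorOf (N M : Matroid α) : Prop := ∃ C D : Set α, (M.contractSet C).deleteSet D = N

/-- An isomorphism between matroids, possibly on different ground types. -/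
def IsIso (M : Matroid α) (N : Matroid β) : Prop :=
  ∃ e : M.E ≃ N.E, ∀ I : Set M.E, M.Indep ((↑) '' I) ↔ N.Indep ((↑) '' (e '' I))

/-- `N` is isomorphic to the uniform matroid `U_{k,n}`: the ground set has `n` elements and
the independent sets are exactly the subsets with at most `k` elements. -/
def IsUnif (N : Matroid α) (k n : ℕ) : Prop :=
  N.E.Finite ∧ N.E.ncard = n ∧ ∀ I ⊆ N.E, (N.Indep I ↔ I.ncard ≤ k)

/-- `M` has a minor isomorphic to `U_{k,n}`. -/
def HasUnifMinor (M : Matroid α) (k n : ℕ) : Prop :=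
  ∃ N : Matroid α, N.IsMinorOf M ∧ N.IsUnif k n

/-- `τ_a(M)`: the minimum size of a collection of subsets of `E(M)`, each of rank at most `a`,
whose union is `E(M)`. -/
noncomputable def tau (M : Matroid α) (a : ℕ) : ℕ :=
  sInf {n | ∃ 𝒞 : Finset (Set α),
    𝒞.card = n ∧ (∀ X ∈ 𝒞, X ⊆ M.E ∧ M.rk X ≤ a) ∧ M.E ⊆ ⋃₀ ↑𝒞}

/-- `M` is `d`-thick: every collection of sets, each of rank less than `r(M)`, whose union
is `E(M)`, has at least `d` members. -/
def Thick (M : Matroid α) (d : ℕ) : Prop :=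
  ∀ 𝒞 : Finset (Set α), (∀ X ∈ 𝒞, X ⊆ M.E ∧ M.rk X < M.rank) → M.E ⊆ ⋃₀ ↑𝒞 → d ≤ 𝒞.card

/-- A set `X` is `d`-thick in `M` if the restriction `M|X` is `d`-thick. -/
def ThickIn (M : Matroid α) (d : ℕ) (X : Set α) : Prop := (M ↾ X).Thick d

/-- A collection of sets is simple in `M` if its members are pairwise dissimilar,
i.e. distinct members have distinct closures. -/
def SimpleColl (M : Matroid α) (𝒳 : Finset (Set α)) : Prop :=
  ∀ X ∈ 𝒳, ∀ Y ∈ 𝒳, M.closure X = M.closure Y → X = Y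

/-- `ε_M(𝒳)`: the maximum size of a subcollection of `𝒳` that is simple in `M`. -/
noncomputable def eps (M : Matroid α) (𝒳 : Finset (Set α)) : ℕ :=
  sSup {n | ∃ 𝒴 : Finset (Set α), 𝒴 ⊆ 𝒳 ∧ M.SimpleColl 𝒴 ∧ 𝒴.card = n}

/-- `𝒳` is `d`-firm in `M`: every subcollection `𝒳'` with `|𝒳'| > |𝒳|/d` has the same rank
as `𝒳`. -/
def Firm (M : Matroid α) (d : ℕ) (𝒳 : Finset (Set α)) : Prop :=
  ∀ 𝒳' ⊆ 𝒳, 𝒳.card < d * 𝒳'.card → M.rk (⋃₀ ↑𝒳') = M.rk (⋃₀ ↑𝒳)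

/-- `ℱ` is a cover of the collection `𝒳` in `M`: every member of `𝒳` is contained in a member
of `ℱ`. -/
def CoverOf (M : Matroid α) (ℱ 𝒳 : Finset (Set α)) : Prop :=
  (∀ F ∈ ℱ, F ⊆ M.E) ∧ ∀ X ∈ 𝒳, ∃ F ∈ ℱ, X ⊆ F

/-- `ℱ` is a cover of the matroid `M`: every element of `E(M)` lies in a member of `ℱ`. -/
def CoverOfGround (M : Matroid α) (ℱ : Finset (Set α)) : Prop :=
  (∀ F ∈ ℱ, F ⊆ M.E) ∧ M.E ⊆ ⋃₀ ↑ℱ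

/-- The weight `wt^d_M(ℱ) = Σ_{F ∈ ℱ} d^{r_M(F)}`. -/
noncomputable def wt (M : Matroid α) (d : ℕ) (ℱ : Finset (Set α)) : ℕ :=
  ∑ F ∈ ℱ, d ^ M.rk F

/-- `ℱ` is a `d`-minimal cover of the collection `𝒳` in `M`. -/
def MinimalCoverOf (M : Matroid α) (d : ℕ) (ℱ 𝒳 : Finset (Set α)) : Prop :=
  M.CoverOf ℱ 𝒳 ∧ ∀ ℱ' : Finset (Set α), M.CoverOf ℱ' 𝒳 → M.wt d ℱ ≤ M.wt d ℱ'

/-- `ℱ` is a `d`-minimal cover of the matroid `M`. -/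
def MinimalCoverOfGround (M : Matroid α) (d : ℕ) (ℱ : Finset (Set α)) : Prop :=
  M.CoverOfGround ℱ ∧ ∀ ℱ' : Finset (Set α), M.CoverOfGround ℱ' → M.wt d ℱ ≤ M.wt d ℱ'

/-- `τ^d(M)`: the minimum weight of a cover of `M`. -/
noncomputable def tauW (M : Matroid α) (d : ℕ) : ℕ :=
  sInf {n | ∃ ℱ : Finset (Set α), M.CoverOfGround ℱ ∧ M.wt d ℱ = n}

/-- `𝒳` is `d`-scattered in `M`: every member of `𝒳` is `d`-thick in `M`, and
`{cl_M(X) : X ∈ 𝒳}` is a `d`-minimal cover of `𝒳` in `M`. -/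
def Scattered (M : Matroid α) (d : ℕ) (𝒳 : Finset (Set α)) : Prop :=
  (∀ X ∈ 𝒳, M.ThickIn d X) ∧ M.MinimalCoverOf d (𝒳.image M.closure) 𝒳

/-- `(M, 𝒮; L)` is an `(a, q, h, d)`-pyramid, where `h = L.length` and `L` lists the
elements `e_1, …, e_h`. -/
def IsPyramid (M : Matroid α) (𝒮 : Finset (Set α)) (L : List α) (a q d : ℕ) : Prop :=
  L.Nodup ∧ M.Indep {x | x ∈ L} ∧
  𝒮.Nonempty ∧
  (∀ S ∈ 𝒮, S ⊆ M.E ∧ M.rk S = a) ∧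
  (∀ S ∈ 𝒮, M.rk (S ∪ {x | x ∈ L}) = M.rk S + M.rk {x | x ∈ L}) ∧
  (∀ i < L.length, ∀ S ∈ 𝒮, ∃ f : Fin q → Set α,
    (∀ j, f j ∈ 𝒮) ∧
    (∀ j k, j ≠ k →
      (M.contractSet {x | x ∈ L.take i}).closure (f j) ≠
        (M.contractSet {x | x ∈ L.take i}).closure (f k)) ∧
    (∀ j, (M.contractSet {x | x ∈ L.take (i+1)}).closure (f j) =
      (M.contractSet {x | x ∈ L.take (i+1)}).closure S)) ∧
  (∀ S ∈ 𝒮, M.ThickIn d S)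

/-- `M` is representable over the field `F`. -/
def RepresentableOver (M : Matroid α) (F : Type*) [Field F] : Prop :=
  ∃ (n : ℕ) (φ : α → (Fin n → F)),
    ∀ I ⊆ M.E, (M.Indep I ↔ LinearIndependent F (fun x : I => φ x))

end Matroid



/-!
Truncating the pyramid to `C = {e_1, …, e_{h'}}` keeps it a pyramid, since skewness to
`{e_1, …, e_h}` passes to the subset `C`. Fix `S₀ ∈ 𝒮` and keep only the members `S` with
`cl(S ∪ C) = cl(S₀ ∪ C)`: this class is closed under branching, because similarity in
`M / {e_1, …, e_{i+1}}` implies similarity in `M / C`. Restricting to the flat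
`F = cl(S₀ ∪ C)`, of rank `a + h'`, changes no closure of a set inside `F`, so we still have a
pyramid. Finally, iterating the branching condition `h'` times from one member grows a `q`-ary
tree whose `q ^ h'` leaves are pairwise dissimilar in the restriction.
-/

namespace Matroid

section

variable {α : Type*} {M : Matroid α} {X Y Y' C R F I : Set α}

lemma cast_rk_eq_eRk (hM : M.Finite) (X : Set α) : (M.rk X : ℕ∞) = M.eRk X := by
  obtain ⟨I, hI⟩ := M.exists_isBasis' X
  have hfin {J : Set α} (hJ : M.Indep J) : J.Finite := hM.ground_finite.subset hJ.subset_ground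
  have hgreatest : IsGreatest {n | ∃ J, J ⊆ X ∧ M.Indep J ∧ J.ncard = n} I.ncard := by
    refine ⟨⟨I, hI.subset, hI.indep, rfl⟩, ?_⟩
    rintro _ ⟨J, hJX, hJ, rfl⟩
    have hJI := hJ.encard_le_eRk_of_subset hJX
    rw [← hI.encard_eq_eRk, ← (hfin hJ).cast_ncard_eq, ← (hfin hI.indep).cast_ncard_eq] at hJI
    exact_mod_cast hJI
  rw [rk, hgreatest.csSup_eq, (hfin hI.indep).cast_ncard_eq, hI.encard_eq_eRk]

lemma rk_mono (hM : M.Finite) (hXY : X ⊆ Y) : M.rk X ≤ M.rk Y := by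
  have h := M.eRk_mono hXY
  rwa [← cast_rk_eq_eRk hM, ← cast_rk_eq_eRk hM, Nat.cast_le] at h

lemma rk_union_le (hM : M.Finite) (X Y : Set α) : M.rk (X ∪ Y) ≤ M.rk X + M.rk Y := by
  have h := M.eRk_union_le_eRk_add_eRk X Y
  rw [← cast_rk_eq_eRk hM, ← cast_rk_eq_eRk hM, ← cast_rk_eq_eRk hM] at h
  exact_mod_cast h

lemma rk_inter_add_rk_union_le (hM : M.Finite) (X Y : Set α) :
    M.rk (X ∩ Y) + M.rk (X ∪ Y) ≤ M.rk X + M.rk Y := by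
  have h := M.eRk_inter_add_eRk_union_le X Y
  simp only [← cast_rk_eq_eRk hM] at h
  exact_mod_cast h

lemma rk_closure (hM : M.Finite) (X : Set α) : M.rk (M.closure X) = M.rk X := by
  have h := M.eRk_closure_eq X
  rwa [← cast_rk_eq_eRk hM, ← cast_rk_eq_eRk hM, Nat.cast_inj] at h

lemma Indep.rk_eq_ncard (hM : M.Finite) (hI : M.Indep I) : M.rk I = I.ncard := by
  have h := hI.eRk_eq_encard
  rwa [← cast_rk_eq_eRk hM, ← (hM.ground_finite.subset hI.subset_ground).cast_ncard_eq,
    Nat.cast_inj] at h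

lemma rk_restrict_of_subset (hXR : X ⊆ R) : (M ↾ R).rk X = M.rk X := by
  simp only [rk, restrict_indep_iff]
  congr 1
  ext n
  exact ⟨fun ⟨I, hIX, hI, hn⟩ => ⟨I, hIX, hI.1, hn⟩,
    fun ⟨I, hIX, hI, hn⟩ => ⟨I, hIX, ⟨hI, hIX.trans hXR⟩, hn⟩⟩

lemma rk_union_eq_add_of_subset (hM : M.Finite) (hskew : M.rk (X ∪ Y) = M.rk X + M.rk Y)
    (hY' : Y' ⊆ Y) : M.rk (X ∪ Y') = M.rk X + M.rk Y' := by
  have hsub := rk_inter_add_rk_union_le hM (X ∪ Y') Y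
  have hinter : M.rk Y' ≤ M.rk ((X ∪ Y') ∩ Y) :=
    rk_mono hM (subset_inter subset_union_right hY')
  rw [union_assoc, union_eq_self_of_subset_left hY'] at hsub
  have hle := rk_union_le hM X Y'
  omega

lemma contractSet_closure_eq_iff (hC : C ⊆ M.E) :
    (M.contractSet C).closure X = (M.contractSet C).closure Y ↔
      M.closure (X ∪ C) = M.closure (Y ∪ C) := by
  change (M ／ C).closure X = (M ／ C).closure Y ↔ _
  rw [contract_closure_eq, contract_closure_eq]
  refine ⟨fun h => ?_, fun h => by rw [h]⟩
  rw [← sdiff_union_of_subset (M.subset_closure_of_subset' subset_union_right hC),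
    ← sdiff_union_of_subset (M.subset_closure_of_subset' (Y := Y ∪ C) subset_union_right hC), h]

lemma closure_union_eq_of_subset (h : M.closure (X ∪ C) = M.closure (Y ∪ C)) (hCR : C ⊆ R) :
    M.closure (X ∪ R) = M.closure (Y ∪ R) := by
  rw [← union_eq_self_of_subset_left hCR, ← union_assoc, ← union_assoc,
    closure_union_congr_left h]

lemma IsFlat.restrict_contractSet_closure (hF : M.IsFlat F) (hXCF : X ∪ C ⊆ F) :
    ((M ↾ F).contractSet C).closure X = (M.contractSet C).closure X := by
  change ((M ↾ F) ／ C).closure X = (M ／ C).closure X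
  rw [contract_closure_eq, contract_closure_eq, restrict_closure_eq _ hXCF hF.subset_ground,
    inter_eq_self_of_subset_left ((M.closure_subset_closure hXCF).trans hF.closure.subset)]

lemma card_le_eps {𝒳 𝒴 : Finset (Set α)} (h𝒴 : 𝒴 ⊆ 𝒳) (hs : M.SimpleColl 𝒴) :
    𝒴.card ≤ M.eps 𝒳 :=
  le_csSup ⟨𝒳.card, by rintro _ ⟨𝒵, h𝒵, -, rfl⟩; exact Finset.card_le_card h𝒵⟩ ⟨𝒴, h𝒴, hs, rfl⟩

lemma card_le_eps_of_injective {ι : Type*} [Fintype ι] {𝒳 : Finset (Set α)} {g : ι → Set α}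
    (hg : ∀ i, g i ∈ 𝒳) (hinj : Function.Injective (M.closure ∘ g)) :
    Fintype.card ι ≤ M.eps 𝒳 := by
  have hcard : (Finset.univ.image g).card = Fintype.card ι :=
    Finset.card_image_of_injective _ hinj.of_comp
  rw [← hcard]
  refine card_le_eps (fun X hX => ?_) fun X hX Y hY hXY => ?_
  · obtain ⟨i, -, rfl⟩ := Finset.mem_image.1 hX
    exact hg i
  · obtain ⟨i, -, rfl⟩ := Finset.mem_image.1 hX
    obtain ⟨j, -, rfl⟩ := Finset.mem_image.1 hY
    rw [hinj hXY]

lemma ncard_setOf_mem {L : List α} (h : L.Nodup) : {x | x ∈ L}.ncard = L.length := by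
  have he : {x | x ∈ L} = ↑L.toFinset := by ext x; simp
  rw [he, Set.ncard_coe_finset, List.toFinset_card_of_nodup h]

namespace IsPyramid

variable {𝒮 : Finset (Set α)} {L : List α} {a q d : ℕ} {S : Set α}

lemma nodup (hP : M.IsPyramid 𝒮 L a q d) : L.Nodup := hP.1

lemma indep (hP : M.IsPyramid 𝒮 L a q d) : M.Indep {x | x ∈ L} := hP.2.1

lemma nonempty (hP : M.IsPyramid 𝒮 L a q d) : 𝒮.Nonempty := hP.2.2.1

lemma subset_ground (hP : M.IsPyramid 𝒮 L a q d) (hS : S ∈ 𝒮) : S ⊆ M.E :=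
  (hP.2.2.2.1 S hS).1

lemma rk_eq (hP : M.IsPyramid 𝒮 L a q d) (hS : S ∈ 𝒮) : M.rk S = a := (hP.2.2.2.1 S hS).2

lemma rk_union_eq (hP : M.IsPyramid 𝒮 L a q d) (hS : S ∈ 𝒮) :
    M.rk (S ∪ {x | x ∈ L}) = M.rk S + M.rk {x | x ∈ L} :=
  hP.2.2.2.2.1 S hS

lemma take (hM : M.Finite) (hP : M.IsPyramid 𝒮 L a q d) (n : ℕ) :
    M.IsPyramid 𝒮 (L.take n) a q d := by
  obtain ⟨hnd, hind, hne, hrk, hskew, hbr, hthick⟩ := hP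
  have hsub : {x | x ∈ L.take n} ⊆ {x | x ∈ L} := fun _ hx => List.take_subset n L hx
  refine ⟨hnd.sublist (L.take_sublist n), hind.subset hsub, hne, hrk,
    fun S hS => rk_union_eq_add_of_subset hM (hskew S hS) hsub, fun i hi S hS => ?_, hthick⟩
  rw [List.length_take] at hi
  rw [List.take_take, List.take_take, min_eq_left (by omega), min_eq_left (by omega)]
  exact hbr i (by omega) S hS

lemma filter_closure_union (hP : M.IsPyramid 𝒮 L a q d) {S₀ : Set α} (hS₀ : S₀ ∈ 𝒮) :
    M.IsPyramid
      (𝒮.filter fun S => M.closure (S ∪ {x | x ∈ L}) = M.closure (S₀ ∪ {x | x ∈ L})) L a q d := by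
  obtain ⟨hnd, hind, -, hrk, hskew, hbr, hthick⟩ := hP
  refine ⟨hnd, hind, ⟨S₀, Finset.mem_filter.2 ⟨hS₀, rfl⟩⟩,
    fun S hS => hrk S (Finset.mem_filter.1 hS).1, fun S hS => hskew S (Finset.mem_filter.1 hS).1,
    fun i hi S hS => ?_, fun S hS => hthick S (Finset.mem_filter.1 hS).1⟩
  obtain ⟨hS, hSS₀⟩ := Finset.mem_filter.1 hS
  obtain ⟨f, hf𝒮, hfne, hfeq⟩ := hbr i hi S hS
  refine ⟨f, fun j => Finset.mem_filter.2 ⟨hf𝒮 j, ?_⟩, hfne, hfeq⟩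
  have hCE : {x | x ∈ L.take (i + 1)} ⊆ M.E :=
    fun _ hx => hind.subset_ground (List.take_subset _ L hx)
  rw [← hSS₀]
  exact closure_union_eq_of_subset ((contractSet_closure_eq_iff hCE).1 (hfeq j))
    fun _ hx => List.take_subset _ L hx

lemma restrict (hP : M.IsPyramid 𝒮 L a q d) (hF : M.IsFlat F) (h𝒮F : ∀ S ∈ 𝒮, S ⊆ F)
    (hLF : {x | x ∈ L} ⊆ F) : (M ↾ F).IsPyramid 𝒮 L a q d := by
  obtain ⟨hnd, hind, hne, hrk, hskew, hbr, hthick⟩ := hP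
  have htakeF (i : ℕ) : {x | x ∈ L.take i} ⊆ F := fun _ hx => hLF (List.take_subset i L hx)
  have hcl (i : ℕ) {S : Set α} (hS : S ∈ 𝒮) :
      ((M ↾ F).contractSet {x | x ∈ L.take i}).closure S =
        (M.contractSet {x | x ∈ L.take i}).closure S :=
    hF.restrict_contractSet_closure (union_subset (h𝒮F S hS) (htakeF i))
  refine ⟨hnd, (restrict_indep_iff).2 ⟨hind, hLF⟩, hne, fun S hS => ?_, fun S hS => ?_,
    fun i hi S hS => ?_, fun S hS => ?_⟩
  · exact ⟨h𝒮F S hS, (rk_restrict_of_subset (h𝒮F S hS)).trans (hrk S hS).2⟩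
  · rw [rk_restrict_of_subset (union_subset (h𝒮F S hS) hLF), rk_restrict_of_subset (h𝒮F S hS),
      rk_restrict_of_subset hLF, hskew S hS]
  · obtain ⟨f, hf𝒮, hfne, hfeq⟩ := hbr i hi S hS
    refine ⟨f, hf𝒮, fun j k hjk => ?_, fun j => ?_⟩
    · rw [hcl i (hf𝒮 j), hcl i (hf𝒮 k)]
      exact hfne j k hjk
    · rw [hcl (i + 1) (hf𝒮 j), hcl (i + 1) hS]
      exact hfeq j
  · change (M ↾ F ↾ S).Thick d
    rw [restrict_restrict_eq _ (h𝒮F S hS)]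
    exact hthick S hS

/-- `g` enumerates the leaves of the `q`-ary tree of depth `n` grown from `S` by the branching
condition. -/
lemma exists_injective_closure (hP : M.IsPyramid 𝒮 L a q d) {n : ℕ} (hn : n ≤ L.length)
    (hS : S ∈ 𝒮) :
    ∃ g : (Fin n → Fin q) → Set α, (∀ v, g v ∈ 𝒮) ∧
      (∀ v, M.closure (g v ∪ {x | x ∈ L.take n}) = M.closure (S ∪ {x | x ∈ L.take n})) ∧
      Function.Injective (M.closure ∘ g) := by
  induction n generalizing S with
  | zero =>
    exact ⟨fun _ => S, fun _ => hS, fun _ => rfl, fun v w _ => Subsingleton.elim v w⟩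
  | succ n ih =>
    obtain ⟨-, hind, -, -, -, hbr, -⟩ := hP
    have htakeE (i : ℕ) : {x | x ∈ L.take i} ⊆ M.E :=
      fun _ hx => hind.subset_ground (List.take_subset i L hx)
    obtain ⟨f, hf𝒮, hfne, hfeq⟩ := hbr n (by omega) S hS
    choose g hg𝒮 hgeq hginj using fun j => ih (by omega) (hf𝒮 j)
    refine ⟨fun v => g (v 0) (Fin.tail v), fun v => hg𝒮 _ _, fun v => ?_, fun v w hvw => ?_⟩
    · refine (closure_union_eq_of_subset (hgeq _ _)
        fun _ hx => List.take_subset_take_left L n.le_succ hx).trans ?_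
      exact (contractSet_closure_eq_iff (htakeE _)).1 (hfeq _)
    · have h0 : v 0 = w 0 := by
        by_contra hne
        refine hfne _ _ hne ((contractSet_closure_eq_iff (htakeE _)).2 ?_)
        rw [← hgeq (v 0) (Fin.tail v), ← hgeq (w 0) (Fin.tail w)]
        exact closure_union_congr_left hvw
      simp only [Function.comp_apply, h0] at hvw
      rw [← Fin.cons_self_tail v, ← Fin.cons_self_tail w, h0, hginj _ hvw]

lemma pow_length_le_eps (hP : M.IsPyramid 𝒮 L a q d) : q ^ L.length ≤ M.eps 𝒮 := by
  obtain ⟨S, hS⟩ := hP.nonempty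
  obtain ⟨g, hg𝒮, -, hginj⟩ := hP.exists_injective_closure le_rfl hS
  simpa using card_le_eps_of_injective hg𝒮 hginj

end IsPyramid

end

theorem statement19_general {α : Type*} (a q d : ℕ)
    (M : Matroid α) (hM : M.Finite) (𝒮 : Finset (Set α)) (L : List α)
    (hP : M.IsPyramid 𝒮 L a q d) (h' : ℕ) (hh' : h' ≤ L.length) :
    ∃ (M' : Matroid α) (𝒮' : Finset (Set α)),
      M'.IsRestriction M ∧ M'.rank = a + h' ∧ 𝒮' ⊆ 𝒮 ∧
      M'.IsPyramid 𝒮' (L.take h') a q d ∧ q ^ h' ≤ M'.eps 𝒮' := by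
  obtain ⟨S₀, hS₀⟩ := hP.nonempty
  have hPC := (hP.take hM h').filter_closure_union hS₀
  set C := {x | x ∈ L.take h'}
  set 𝒮' := 𝒮.filter fun S => M.closure (S ∪ C) = M.closure (S₀ ∪ C)
  have hS₀' : S₀ ∈ 𝒮' := Finset.mem_filter.2 ⟨hS₀, rfl⟩
  have hF : M.IsFlat (M.closure (S₀ ∪ C)) := M.isFlat_closure _
  have h𝒮'F (S : Set α) (hS : S ∈ 𝒮') : S ∪ C ⊆ M.closure (S₀ ∪ C) := by
    rw [← (Finset.mem_filter.1 hS).2]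
    exact M.subset_closure _ (union_subset (hPC.subset_ground hS) hPC.indep.subset_ground)
  have hP' := hPC.restrict hF (fun S hS => subset_union_left.trans (h𝒮'F S hS))
    (subset_union_right.trans (h𝒮'F S₀ hS₀'))
  have hrkC : M.rk C = h' := by
    rw [hPC.indep.rk_eq_ncard hM, ncard_setOf_mem hPC.nodup, List.length_take,
      min_eq_left hh']
  refine ⟨_, 𝒮', M.restrict_isRestriction _ hF.subset_ground, ?_, Finset.filter_subset _ _, hP',
    by simpa [hh'] using hP'.pow_length_le_eps⟩
  rw [rank, restrict_ground_eq, rk_restrict_of_subset subset_rfl, rk_closure hM,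
    hPC.rk_union_eq hS₀', hPC.rk_eq hS₀', hrkC]

/-- If `(M, 𝒮; e_1, …, e_h)` is an `(a,q,h,d)`-pyramid and `0 ≤ h' ≤ h`,
then there are a restriction `M'` of `M` with `r(M') = a + h'` and a subcollection `𝒮' ⊆ 𝒮`
such that `(M', 𝒮'; e_1, …, e_{h'})` is an `(a,q,h',d)`-pyramid and `ε_{M'}(𝒮') ≥ q^{h'}`. -/
theorem statement19 {α : Type*} (a q d : ℕ) (ha : 1 ≤ a) (hq : 1 ≤ q) (hd : 1 ≤ d)
    (M : Matroid α) (hM : M.Finite) (𝒮 : Finset (Set α)) (L : List α)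
    (hP : M.IsPyramid 𝒮 L a q d) (h' : ℕ) (hh' : h' ≤ L.length) :
    ∃ (M' : Matroid α) (𝒮' : Finset (Set α)),
      M'.IsRestriction M ∧ M'.rank = a + h' ∧ 𝒮' ⊆ 𝒮 ∧
      M'.IsPyramid 𝒮' (L.take h') a q d ∧ q ^ h' ≤ M'.eps 𝒮' :=
  statement19_general a q d M hM 𝒮 L hP h' hh'

end Matroid
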